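/- Let p₁, p₂, p₃ : ℝ × ℝ → GL_n(ℝ) be smooth maps and let B be an Ad-invariant bilinear form on n×n real matrices. Then at every point of ℝ × ℝ one has B(Θ(p₂), φ̂(p₃)) − B(Θ(p₁p₂), φ̂(p₃)) + B(Θ(p₁), φ̂(p₂p₃)) − B(Θ(p₁), φ̂(p₂)) = 0, where p₁p₂ and p₂p₃ denote pointwise matrix products. (This is the pointwise integrand identity establishing δ_h α = 0 in the paper's Lemma on the rigid connective structure of the Chern–Simons bundle 2-gerbe.) -/

import Mathlib

attribute [local instance] Matrix.normedAddCommGroup Matrix.normedSpace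

/-- Partial derivative in the first (`s`) variable of a matrix-valued map on `ℝ × ℝ`. -/
noncomputable def pdS {n : ℕ} (g : ℝ × ℝ → Matrix (Fin n) (Fin n) ℝ) (x : ℝ × ℝ) :
    Matrix (Fin n) (Fin n) ℝ := fderiv ℝ g x (1, 0)

/-- Partial derivative in the second (`θ`) variable of a matrix-valued map on `ℝ × ℝ`. -/
noncomputable def pdθ {n : ℕ} (g : ℝ × ℝ → Matrix (Fin n) (Fin n) ℝ) (x : ℝ × ℝ) :
    Matrix (Fin n) (Fin n) ℝ := fderiv ℝ g x (0, 1)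

/-- `Θ(g) = g⁻¹ · ∂ₛ g`, the left Maurer–Cartan form evaluated on the variation. -/
noncomputable def Th {n : ℕ} (g : ℝ × ℝ → Matrix (Fin n) (Fin n) ℝ) (x : ℝ × ℝ) :
    Matrix (Fin n) (Fin n) ℝ := (g x)⁻¹ * pdS g x

/-- `Θ̂(g) = (∂ₛ g) · g⁻¹`, the right Maurer–Cartan form evaluated on the variation. -/
noncomputable def ThHat {n : ℕ} (g : ℝ × ℝ → Matrix (Fin n) (Fin n) ℝ) (x : ℝ × ℝ) :
    Matrix (Fin n) (Fin n) ℝ := pdS g x * (g x)⁻¹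

/-- `φ(g) = g⁻¹ · ∂_θ g`, the Higgs field. -/
noncomputable def phiL {n : ℕ} (g : ℝ × ℝ → Matrix (Fin n) (Fin n) ℝ) (x : ℝ × ℝ) :
    Matrix (Fin n) (Fin n) ℝ := (g x)⁻¹ * pdθ g x

/-- `φ̂(g) = (∂_θ g) · g⁻¹`, the conjugated Higgs field. -/
noncomputable def phiHat {n : ℕ} (g : ℝ × ℝ → Matrix (Fin n) (Fin n) ℝ) (x : ℝ × ℝ) :
    Matrix (Fin n) (Fin n) ℝ := pdθ g x * (g x)⁻¹

/-- `Ad_g(X) = g · X · g⁻¹`. -/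
noncomputable def AdM {n : ℕ} (g X : Matrix (Fin n) (Fin n) ℝ) :
    Matrix (Fin n) (Fin n) ℝ := g * X * g⁻¹

/-- A bilinear form on `n × n` matrices is `Ad`-invariant if it is preserved by
conjugation by any invertible matrix. -/
def AdInvariant {n : ℕ}
    (B : Matrix (Fin n) (Fin n) ℝ →ₗ[ℝ] Matrix (Fin n) (Fin n) ℝ →ₗ[ℝ] ℝ) : Prop :=
  ∀ g : Matrix (Fin n) (Fin n) ℝ, IsUnit g →
    ∀ X Y : Matrix (Fin n) (Fin n) ℝ, B (g * X * g⁻¹) (g * Y * g⁻¹) = B X Y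

/-- Matrix multiplication as a continuous bilinear map (via finite-dimensionality). -/
noncomputable def mulCLM (n : ℕ) :
    Matrix (Fin n) (Fin n) ℝ →L[ℝ] Matrix (Fin n) (Fin n) ℝ →L[ℝ] Matrix (Fin n) (Fin n) ℝ :=
  LinearMap.toContinuousLinearMap
    { toFun := fun a => LinearMap.toContinuousLinearMap (LinearMap.mulLeft ℝ a)
      map_add' := by intro a b; ext c; simp [add_mul]
      map_smul' := by intro r a; ext c; simp [smul_mul_assoc] }

@[simp] lemma mulCLM_apply {n : ℕ} (a b : Matrix (Fin n) (Fin n) ℝ) :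
    mulCLM n a b = a * b := rfl

lemma pd_mul {n : ℕ} (f g : ℝ × ℝ → Matrix (Fin n) (Fin n) ℝ)
    (hf : ContDiff ℝ (⊤ : ℕ∞) f) (hg : ContDiff ℝ (⊤ : ℕ∞) g) (x : ℝ × ℝ) (v : ℝ × ℝ) :
    fderiv ℝ (fun y => f y * g y) x v = fderiv ℝ f x v * g x + f x * fderiv ℝ g x v := by
  have hf' := (hf.differentiable (by simp)).differentiableAt (x := x)
  have hg' := (hg.differentiable (by simp)).differentiableAt (x := x)
  have h := (mulCLM n).fderiv_of_bilinear hf' hg'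
  have heq : (fun y => f y * g y) = fun y => mulCLM n (f y) (g y) := by
    funext y; simp
  rw [heq]
  erw [h]
  simp [ContinuousLinearMap.precompR, ContinuousLinearMap.precompL, add_comm]
  exact add_comm _ _

/-- The pointwise integrand identity establishing `δ_h α = 0` for the rigid
connective structure on the Chern–Simons bundle 2-gerbe: for smooth
`p₁, p₂, p₃ : ℝ × ℝ → GLₙ(ℝ)` and an `Ad`-invariant bilinear form `B`, at every point
`B(Θ(p₂), φ̂(p₃)) − B(Θ(p₁p₂), φ̂(p₃)) + B(Θ(p₁), φ̂(p₂p₃)) − B(Θ(p₁), φ̂(p₂)) = 0`. -/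
theorem delta_h_alpha_eq_zero_integrand
    {n : ℕ} (hn : 1 ≤ n)
    (B : Matrix (Fin n) (Fin n) ℝ →ₗ[ℝ] Matrix (Fin n) (Fin n) ℝ →ₗ[ℝ] ℝ)
    (hB : AdInvariant B)
    (p₁ p₂ p₃ : ℝ × ℝ → Matrix (Fin n) (Fin n) ℝ)
    (hp₁ : ContDiff ℝ (⊤ : ℕ∞) p₁) (hp₂ : ContDiff ℝ (⊤ : ℕ∞) p₂) (hp₃ : ContDiff ℝ (⊤ : ℕ∞) p₃)
    (hp₁U : ∀ x, IsUnit (p₁ x)) (hp₂U : ∀ x, IsUnit (p₂ x)) (hp₃U : ∀ x, IsUnit (p₃ x)) :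
    ∀ x : ℝ × ℝ,
      B (Th p₂ x) (phiHat p₃ x)
        - B (Th (fun y => p₁ y * p₂ y) x) (phiHat p₃ x)
        + B (Th p₁ x) (phiHat (fun y => p₂ y * p₃ y) x)
        - B (Th p₁ x) (phiHat p₂ x)
      = 0 := by
  intro x
  have h₁ := hp₁U x
  have h₂ := hp₂U x
  have h₃ := hp₃U x
  have h₁d : IsUnit (p₁ x).det := (Matrix.isUnit_iff_isUnit_det _).mp h₁
  have h₂d : IsUnit (p₂ x).det := (Matrix.isUnit_iff_isUnit_det _).mp h₂
  have h₃d : IsUnit (p₃ x).det := (Matrix.isUnit_iff_isUnit_det _).mp h₃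
  have e1 : Th (fun y => p₁ y * p₂ y) x
      = (p₂ x)⁻¹ * Th p₁ x * p₂ x + Th p₂ x := by
    simp only [Th, pdS]
    rw [pd_mul p₁ p₂ hp₁ hp₂, Matrix.mul_inv_rev]
    simp only [mul_add, Matrix.mul_assoc]
    rw [Matrix.nonsing_inv_mul_cancel_left _ _ h₁d]
  have e2 : phiHat (fun y => p₂ y * p₃ y) x
      = phiHat p₂ x + p₂ x * phiHat p₃ x * (p₂ x)⁻¹ := by
    simp only [phiHat, pdθ]
    rw [pd_mul p₂ p₃ hp₂ hp₃, Matrix.mul_inv_rev]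
    simp only [add_mul, Matrix.mul_assoc]
    rw [Matrix.mul_nonsing_inv_cancel_left _ _ h₃d]
  have key : B ((p₂ x)⁻¹ * Th p₁ x * p₂ x) (phiHat p₃ x)
      = B (Th p₁ x) (p₂ x * phiHat p₃ x * (p₂ x)⁻¹) := by
    have := hB (p₂ x) h₂ ((p₂ x)⁻¹ * Th p₁ x * p₂ x) (phiHat p₃ x)
    have e : p₂ x * ((p₂ x)⁻¹ * Th p₁ x * p₂ x) * (p₂ x)⁻¹ = Th p₁ x := by
      simp only [Matrix.mul_assoc]
      rw [Matrix.mul_nonsing_inv _ h₂d, Matrix.mul_one,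
        Matrix.mul_nonsing_inv_cancel_left _ _ h₂d]
    rw [← this, e]
  rw [e1, e2]
  simp only [map_add, LinearMap.add_apply, key]
  ring
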